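/- Let d ≥ 2 and let F ⊆ binom(ℕ,d) be a finite family. Then Inc(F) admits the decompositions: Inc(F) = ∪_{k≥1} {(k,v̂) : v̂ ∈ Inc(F̂_{1,k}) ∪ π_1(F̂_{1,k-1})} and Inc(F) = ∪_{k≥1} {(v̂,k) : v̂ ∈ F̂_{d,k} ∪ Inc(F̂_{d,k-1})} (with F̂_{1,0} = F̂_{d,0} = ∅). -/

import Mathlib

def Inc1 : Set (ℕ → ℕ) := {π | StrictMono π ∧ ∀ j, π j ≤ j + 1}

def incF (F : Set (Finset ℕ)) : Set (Finset ℕ) :=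
  {v | ∃ u ∈ F, ∃ π ∈ Inc1, v = u.image π}

def compressionIn (A : Set ℕ) (d n : ℕ) : Set (Finset ℕ) :=
  {v | ↑v ⊆ A ∧ v.card = d ∧
    {w : Finset ℕ | ↑w ⊆ A ∧ w.card = d ∧ toColex w ≤ toColex v}.ncard ≤ n}

def IsCompressedIn (A : Set ℕ) (d : ℕ) (F : Set (Finset ℕ)) : Prop :=
  (∀ u ∈ F, ↑u ⊆ A ∧ u.card = d) ∧
  ∀ u ∈ F, ∀ v : Finset ℕ, ↑v ⊆ A → v.card = d → toColex v ≤ toColex u → v ∈ F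

def hatL (F : Set (Finset ℕ)) (k : ℕ) : Set (Finset ℕ) :=
  {u | (∀ x ∈ u, k < x) ∧ insert k u ∈ F}

def hatR (F : Set (Finset ℕ)) (k : ℕ) : Set (Finset ℕ) :=
  {u | (∀ x ∈ u, x < k) ∧ insert k u ∈ F}

def leftComp (d : ℕ) (F : Set (Finset ℕ)) : Set (Finset ℕ) :=
  ⋃ k : ℕ, {v | ∃ w ∈ compressionIn {j | k < j} (d - 1) (hatL F k).ncard, v = insert k w}

def rightComp (d : ℕ) (F : Set (Finset ℕ)) : Set (Finset ℕ) :=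
  ⋃ k : ℕ, {v | ∃ w ∈ compressionIn Set.univ (d - 1) (hatR F k).ncard, v = insert k w}

def BorelLE (u v : Finset ℕ) : Prop :=
  List.Forall₂ (· ≤ ·) (u.sort (· ≤ ·)) (v.sort (· ≤ ·))

def IsShifted (F : Set (Finset ℕ)) : Prop :=
  ∀ u ∈ F, ∀ v, BorelLE v u → v ∈ F

def piShift (i : ℕ) : ℕ → ℕ := fun j => if j < i then j else j + 1

def IsBinRep (d m s : ℕ) (a : ℕ → ℕ) : Prop :=
  1 ≤ s ∧ s ≤ d ∧ (∀ i, s ≤ i → i < d → a i < a (i + 1)) ∧ s ≤ a s ∧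
    m = ∑ i ∈ Finset.Icc s d, Nat.choose (a i) i

def famLE (F G : Set (Finset ℕ)) : Prop :=
  F = G ∨ ∃ m ∈ G, m ∉ F ∧
    ∀ w : Finset ℕ, (w ∈ F ∧ w ∉ G) ∨ (w ∈ G ∧ w ∉ F) → toColex w ≤ toColex m

def IsSimplicialComplex (Δ : Set (Finset ℕ)) : Prop :=
  Δ.Finite ∧ ∀ F ∈ Δ, ∀ G ⊆ F, G ∈ Δ

/-!
An increasing map `π ∈ Inc1` satisfies `π j ∈ {j, j + 1}`, and once it shifts it keeps
shifting; so on any finite set it agrees with a single `piShift t`. Write `u = {k} ∪ w`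
with `k = min u`: if `piShift t` fixes `k` it acts on `w` as an arbitrary element of `Inc1`,
otherwise it shifts all of `u` by one. With `k = max u` instead: if `piShift t` fixes `k`
it fixes all of `u`, otherwise `k` goes to `k + 1` and `w` moves arbitrarily.
-/

lemma piShift_of_lt {i j : ℕ} (h : j < i) : piShift i j = j := if_pos h

lemma piShift_of_le {i j : ℕ} (h : i ≤ j) : piShift i j = j + 1 := if_neg h.not_gt

lemma piShift_congr {i i' j : ℕ} (h : j < i ↔ j < i') : piShift i j = piShift i' j := by
  simp only [piShift, h]

lemma piShift_mem_Inc1 (i : ℕ) : piShift i ∈ Inc1 := by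
  constructor
  · intro a b hab; unfold piShift; split_ifs <;> omega
  · intro j; unfold piShift; split_ifs <;> omega

namespace Inc1

variable {π : ℕ → ℕ}

lemma apply_eq_or_eq_succ (hπ : π ∈ Inc1) (j : ℕ) : π j = j ∨ π j = j + 1 := by
  have : j ≤ π j := hπ.1.le_apply
  have := hπ.2 j
  omega

lemma apply_eq_succ_of_le (hπ : π ∈ Inc1) {i j : ℕ} (hi : π i = i + 1) (hij : i ≤ j) :
    π j = j + 1 := by
  induction j, hij using Nat.le_induction with
  | base => exact hi
  | succ n _ ih =>
    have := hπ.1 (lt_add_one n)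
    have := hπ.2 (n + 1)
    omega

lemma exists_eqOn_piShift (hπ : π ∈ Inc1) (s : Finset ℕ) :
    ∃ t, Set.EqOn π (piShift t) s := by
  -- the first shifted point, or any point beyond `s` if `π` fixes all of `s`
  have hex : ∃ j, π j = j + 1 ∨ s.sup id < j := ⟨s.sup id + 1, Or.inr (lt_add_one _)⟩
  refine ⟨Nat.find hex, fun x hx => ?_⟩
  have hxs : x ≤ s.sup id := Finset.le_sup (f := id) hx
  rcases lt_or_ge x (Nat.find hex) with hlt | hge
  · have := Nat.find_min hex hlt
    have := apply_eq_or_eq_succ hπ x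
    rw [piShift_of_lt hlt]
    omega
  · have hshift : π (Nat.find hex) = Nat.find hex + 1 :=
      (Nat.find_spec hex).resolve_right (by omega)
    rw [piShift_of_le hge, apply_eq_succ_of_le hπ hshift hge]

end Inc1

lemma mem_incF_iff {F : Set (Finset ℕ)} {v : Finset ℕ} :
    v ∈ incF F ↔ ∃ u ∈ F, ∃ t, v = u.image (piShift t) := by
  constructor
  · rintro ⟨u, hu, π, hπ, rfl⟩
    obtain ⟨t, ht⟩ := Inc1.exists_eqOn_piShift hπ u
    exact ⟨u, hu, t, Finset.image_congr ht⟩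
  · rintro ⟨u, hu, t, rfl⟩
    exact ⟨u, hu, piShift t, piShift_mem_Inc1 t, rfl⟩

section hat

variable {F : Set (Finset ℕ)} {u : Finset ℕ}

lemma exists_mem_hatL_eq_insert (hu : u ∈ F) (hne : u.Nonempty) :
    ∃ k, ∃ w ∈ hatL F k, u = insert k w := by
  have hins := Finset.insert_erase (u.min'_mem hne)
  refine ⟨u.min' hne, u.erase (u.min' hne), ⟨fun x hx => ?_, by rwa [hins]⟩, hins.symm⟩
  exact (u.min'_le x (Finset.mem_of_mem_erase hx)).lt_of_ne (Finset.ne_of_mem_erase hx).symm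

lemma exists_mem_hatR_eq_insert (hu : u ∈ F) (hne : u.Nonempty) :
    ∃ k, ∃ w ∈ hatR F k, u = insert k w := by
  have hins := Finset.insert_erase (u.max'_mem hne)
  refine ⟨u.max' hne, u.erase (u.max' hne), ⟨fun x hx => ?_, by rwa [hins]⟩, hins.symm⟩
  exact (u.le_max' x (Finset.mem_of_mem_erase hx)).lt_of_ne (Finset.ne_of_mem_erase hx)

variable (hF : ∀ u ∈ F, u.Nonempty)
include hF

theorem incF_eq_iUnion_hatL :
    incF F = (⋃ k : ℕ, {v | ∃ w ∈ incF (hatL F k), v = insert k w}) ∪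
      (⋃ k : ℕ, {v | ∃ w ∈ hatL F k, v = insert (k + 1) (w.image (· + 1))}) := by
  ext v
  simp only [Set.mem_union, Set.mem_iUnion, Set.mem_ofPred_eq, mem_incF_iff]
  constructor
  · rintro ⟨u, hu, t, rfl⟩
    obtain ⟨k, w, hw, rfl⟩ := exists_mem_hatL_eq_insert hu (hF u hu)
    rw [Finset.image_insert]
    rcases lt_or_ge k t with hkt | htk
    · exact .inl ⟨k, _, ⟨w, hw, t, rfl⟩, by rw [piShift_of_lt hkt]⟩
    · refine .inr ⟨k, w, hw, ?_⟩
      rw [piShift_of_le htk,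
        Finset.image_congr fun x hx => piShift_of_le (htk.trans (hw.1 x hx).le)]
  · rintro (⟨k, _, ⟨w, hw, t, rfl⟩, rfl⟩ | ⟨k, w, hw, rfl⟩)
    · refine ⟨insert k w, hw.2, max t (k + 1), ?_⟩
      rw [Finset.image_insert, piShift_of_lt (by omega)]
      congr 1
      exact Finset.image_congr fun x hx => piShift_congr (by have := hw.1 x hx; omega)
    · refine ⟨insert k w, hw.2, 0, ?_⟩
      rw [Finset.image_insert, piShift_of_le k.zero_le,
        Finset.image_congr fun x _ => piShift_of_le x.zero_le]

theorem incF_eq_iUnion_hatR :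
    incF F = (⋃ k : ℕ, {v | ∃ w ∈ hatR F k, v = insert k w}) ∪
      (⋃ k : ℕ, {v | ∃ w ∈ incF (hatR F k), v = insert (k + 1) w}) := by
  ext v
  simp only [Set.mem_union, Set.mem_iUnion, Set.mem_ofPred_eq, mem_incF_iff]
  constructor
  · rintro ⟨u, hu, t, rfl⟩
    obtain ⟨k, w, hw, rfl⟩ := exists_mem_hatR_eq_insert hu (hF u hu)
    rw [Finset.image_insert]
    rcases lt_or_ge k t with hkt | htk
    · refine .inl ⟨k, w, hw, ?_⟩
      rw [piShift_of_lt hkt, Finset.image_congr fun x hx => piShift_of_lt ((hw.1 x hx).trans hkt),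
        Finset.image_id']
    · exact .inr ⟨k, _, ⟨w, hw, t, rfl⟩, by rw [piShift_of_le htk]⟩
  · rintro (⟨k, w, hw, rfl⟩ | ⟨k, _, ⟨w, hw, t, rfl⟩, rfl⟩)
    · refine ⟨insert k w, hw.2, k + 1, ?_⟩
      rw [Finset.image_insert, piShift_of_lt (lt_add_one k),
        Finset.image_congr fun x hx => piShift_of_lt (Nat.lt_succ_of_lt (hw.1 x hx)),
        Finset.image_id']
    · refine ⟨insert k w, hw.2, min t k, ?_⟩
      rw [Finset.image_insert, piShift_of_le (min_le_right t k)]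
      congr 1
      exact Finset.image_congr fun x hx => piShift_congr (by have := hw.1 x hx; omega)

end hat

theorem stmt9_general (d : ℕ) (hd : 2 ≤ d) (F : Set (Finset ℕ))
    (hFd : ∀ u ∈ F, u.card = d) :
    incF F = (⋃ k : ℕ, {v | ∃ w ∈ incF (hatL F k), v = insert k w}) ∪
        (⋃ k : ℕ, {v | ∃ w ∈ hatL F k, v = insert (k + 1) (w.image (· + 1))}) ∧
      incF F = (⋃ k : ℕ, {v | ∃ w ∈ hatR F k, v = insert k w}) ∪
        (⋃ k : ℕ, {v | ∃ w ∈ incF (hatR F k), v = insert (k + 1) w}) := by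
  have hF : ∀ u ∈ F, u.Nonempty := fun u hu => Finset.card_pos.mp (by rw [hFd u hu]; omega)
  exact ⟨incF_eq_iUnion_hatL hF, incF_eq_iUnion_hatR hF⟩

theorem stmt9 (d : ℕ) (hd : 2 ≤ d) (F : Set (Finset ℕ)) (hFfin : F.Finite)
    (hFd : ∀ u ∈ F, u.card = d) :
    incF F = (⋃ k : ℕ, {v | ∃ w ∈ incF (hatL F k), v = insert k w}) ∪
        (⋃ k : ℕ, {v | ∃ w ∈ hatL F k, v = insert (k + 1) (w.image (· + 1))}) ∧
      incF F = (⋃ k : ℕ, {v | ∃ w ∈ hatR F k, v = insert k w}) ∪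
        (⋃ k : ℕ, {v | ∃ w ∈ incF (hatR F k), v = insert (k + 1) w}) :=
  stmt9_general d hd F hFd
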